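/- (Finiteness and strict monotonicity of c) For every h_tot > 0 and positive integer N_T, the function τ ↦ c(τ) = ∫_ℝ e^{−u²/2}·(2·e^{(h_tot·τ/N_T)·|u|} − 1 − 2·(h_tot·τ/N_T)·|u|)^{N_T} du is finite for all τ ≥ 0, satisfies c(0) = √(2π), and is strictly increasing on [0, ∞). -/

import Mathlib

/-!
With `b = h_tot τ / N_T` the integrand is `e^{-u²/2} F(b|u|)^{N_T}`, where `F t = 2eᵗ - 1 - 2t`
satisfies `1 ≤ F t` and, on `[0, ∞)`, is strictly increasing with `F t ≤ 2eᵗ`. The upper bound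
dominates the integrand by `2^{N_T} e^{-u²/2 + N_T b|u|}`, integrable by completing the square.
For `b₁ < b₂` the difference of the integrands is continuous, nonnegative and positive away from
`u = 0`, so its integral is positive.
-/

open Real MeasureTheory Set

lemma one_le_two_mul_exp_sub_one_sub_two_mul (t : ℝ) :
    1 ≤ 2 * exp t - 1 - 2 * t := by
  nlinarith [add_one_le_exp t]

lemma strictMonoOn_two_mul_exp_sub_one_sub_two_mul :
    StrictMonoOn (fun t : ℝ => 2 * exp t - 1 - 2 * t) (Ici 0) := by
  intro s hs t _ hst
  have hsplit : exp t = exp s * exp (t - s) := by rw [← exp_add, add_sub_cancel]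
  have hgap : t - s + 1 < exp (t - s) := add_one_lt_exp (sub_ne_zero.mpr hst.ne')
  have hs1 : 1 ≤ exp s := one_le_exp hs
  simp only
  nlinarith

lemma integrable_exp_neg_mul_sq_mul_exp_mul {b : ℝ} (hb : 0 < b) (c : ℝ) :
    Integrable (fun u : ℝ => exp (-b * u ^ 2) * exp (c * u)) := by
  refine (((integrable_exp_neg_mul_sq hb).comp_sub_right (c / (2 * b))).const_mul
    (exp (c ^ 2 / (4 * b)))).congr (Filter.Eventually.of_forall fun u => ?_)
  simp only [← exp_add]
  congr 1
  field_simp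
  ring

lemma integrable_exp_neg_mul_sq_mul_exp_mul_abs {b : ℝ} (hb : 0 < b) (c : ℝ) :
    Integrable (fun u : ℝ => exp (-b * u ^ 2) * exp (c * |u|)) := by
  refine ((integrable_exp_neg_mul_sq_mul_exp_mul hb c).add
    (integrable_exp_neg_mul_sq_mul_exp_mul hb (-c))).mono' (by fun_prop)
    (Filter.Eventually.of_forall fun u => ?_)
  have habs : exp (c * |u|) ≤ exp (c * u) + exp (-(c * u)) :=
    calc exp (c * |u|) ≤ exp |c * u| := by
          gcongr; rw [abs_mul]; exact mul_le_mul_of_nonneg_right (le_abs_self c) (abs_nonneg u)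
      _ ≤ exp (c * u) + exp (-(c * u)) := exp_abs_le _
  rw [norm_of_nonneg (by positivity), Pi.add_apply, neg_mul c, ← mul_add]
  exact mul_le_mul_of_nonneg_left habs (exp_pos _).le

/-- The integrand of `c(τ)`, with `b = h_tot τ / N_T` and `n = N_T`. -/
noncomputable def cIntegrand (n : ℕ) (b u : ℝ) : ℝ :=
  exp (-u ^ 2 / 2) * (2 * exp (b * |u|) - 1 - 2 * (b * |u|)) ^ n

lemma continuous_cIntegrand (n : ℕ) (b : ℝ) : Continuous (cIntegrand n b) := by
  unfold cIntegrand
  fun_prop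

lemma norm_cIntegrand_le {n : ℕ} {b : ℝ} (hb : 0 ≤ b) (u : ℝ) :
    ‖cIntegrand n b u‖ ≤ 2 ^ n * (exp (-(1 / 2) * u ^ 2) * exp (n * b * |u|)) := by
  have ht : 0 ≤ b * |u| := mul_nonneg hb (abs_nonneg u)
  have hF := one_le_two_mul_exp_sub_one_sub_two_mul (b * |u|)
  have hpow : (2 * exp (b * |u|) - 1 - 2 * (b * |u|)) ^ n ≤ 2 ^ n * exp (n * b * |u|) :=
    calc (2 * exp (b * |u|) - 1 - 2 * (b * |u|)) ^ n ≤ (2 * exp (b * |u|)) ^ n :=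
          pow_le_pow_left₀ (by linarith) (by linarith) n
      _ = 2 ^ n * exp (n * b * |u|) := by rw [mul_pow, ← exp_nat_mul, mul_assoc]
  rw [norm_of_nonneg (by unfold cIntegrand; positivity)]
  calc cIntegrand n b u ≤ exp (-u ^ 2 / 2) * (2 ^ n * exp (n * b * |u|)) :=
        mul_le_mul_of_nonneg_left hpow (exp_pos _).le
    _ = 2 ^ n * (exp (-(1 / 2) * u ^ 2) * exp (n * b * |u|)) := by ring_nf

lemma integrable_cIntegrand (n : ℕ) {b : ℝ} (hb : 0 ≤ b) : Integrable (cIntegrand n b) :=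
  ((integrable_exp_neg_mul_sq_mul_exp_mul_abs (b := 1 / 2) (by norm_num) _).const_mul _).mono'
    (continuous_cIntegrand n b).aestronglyMeasurable
    (Filter.Eventually.of_forall (norm_cIntegrand_le hb))

lemma integral_cIntegrand_zero (n : ℕ) : ∫ u, cIntegrand n 0 u = √(2 * π) := by
  have h : cIntegrand n 0 = fun u => exp (-(1 / 2) * u ^ 2) := by
    ext u
    simp only [cIntegrand, zero_mul, exp_zero, mul_zero]
    norm_num
    ring_nf
  rw [h, integral_gaussian]
  congr 1
  field_simp

lemma cIntegrand_lt_cIntegrand {n : ℕ} (hn : 0 < n) {b₁ b₂ : ℝ} (hb₁ : 0 ≤ b₁) (hb : b₁ < b₂)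
    {u : ℝ} (hu : u ≠ 0) : cIntegrand n b₁ u < cIntegrand n b₂ u := by
  have hu0 : 0 < |u| := abs_pos.mpr hu
  have ht : 0 ≤ b₁ * |u| := mul_nonneg hb₁ hu0.le
  refine mul_lt_mul_of_pos_left (pow_lt_pow_left₀ ?_ ?_ hn.ne') (exp_pos _)
  · exact strictMonoOn_two_mul_exp_sub_one_sub_two_mul ht
      (mul_nonneg (hb₁.trans hb.le) hu0.le) (mul_lt_mul_of_pos_right hb hu0)
  · linarith [one_le_two_mul_exp_sub_one_sub_two_mul (b₁ * |u|)]

lemma cIntegrand_le_cIntegrand (n : ℕ) {b₁ b₂ : ℝ} (hb₁ : 0 ≤ b₁) (hb : b₁ ≤ b₂) (u : ℝ) :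
    cIntegrand n b₁ u ≤ cIntegrand n b₂ u := by
  have ht : 0 ≤ b₁ * |u| := mul_nonneg hb₁ (abs_nonneg u)
  refine mul_le_mul_of_nonneg_left (pow_le_pow_left₀ ?_ ?_ n) (exp_pos _).le
  · linarith [one_le_two_mul_exp_sub_one_sub_two_mul (b₁ * |u|)]
  · exact strictMonoOn_two_mul_exp_sub_one_sub_two_mul.monotoneOn ht
      (mul_nonneg (hb₁.trans hb) (abs_nonneg u)) (mul_le_mul_of_nonneg_right hb (abs_nonneg u))

lemma strictMonoOn_integral_cIntegrand {n : ℕ} (hn : 0 < n) :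
    StrictMonoOn (fun b => ∫ u, cIntegrand n b u) (Ici 0) := by
  intro b₁ hb₁ b₂ hb₂ hb
  have hpos : 0 < ∫ u, (cIntegrand n b₂ u - cIntegrand n b₁ u) :=
    integral_pos_of_integrable_nonneg_nonzero (x := 1)
      ((continuous_cIntegrand n b₂).sub (continuous_cIntegrand n b₁))
      ((integrable_cIntegrand n hb₂).sub (integrable_cIntegrand n hb₁))
      (fun u => sub_nonneg.mpr (cIntegrand_le_cIntegrand n hb₁ hb.le u))
      (sub_pos.mpr (cIntegrand_lt_cIntegrand hn hb₁ hb one_ne_zero)).ne'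
  rw [integral_sub (integrable_cIntegrand n hb₂) (integrable_cIntegrand n hb₁)] at hpos
  exact sub_pos.mp hpos

/-- (Finiteness and strict monotonicity of `c`) For every `h_tot > 0` and positive integer
`N_T`, the function
`c(τ) = ∫ e^{−u²/2}·(2·e^{(h_tot·τ/N_T)·|u|} − 1 − 2·(h_tot·τ/N_T)·|u|)^{N_T} du`
is finite (the integrand is integrable) for all `τ ≥ 0`, satisfies `c(0) = √(2π)`,
and is strictly increasing on `[0, ∞)`. -/
theorem stmt17 (h_tot : ℝ) (hh : 0 < h_tot) (NT : ℕ) (hNT : 0 < NT) :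
    (∀ τ : ℝ, 0 ≤ τ → MeasureTheory.Integrable (fun u : ℝ =>
        Real.exp (-u ^ 2 / 2) *
          (2 * Real.exp (h_tot * τ / NT * |u|) - 1 - 2 * (h_tot * τ / NT * |u|)) ^ NT)) ∧
    (∫ u : ℝ, Real.exp (-u ^ 2 / 2) *
        (2 * Real.exp (h_tot * 0 / NT * |u|) - 1 - 2 * (h_tot * 0 / NT * |u|)) ^ NT) =
      Real.sqrt (2 * Real.pi) ∧
    StrictMonoOn (fun τ : ℝ => ∫ u : ℝ, Real.exp (-u ^ 2 / 2) *
        (2 * Real.exp (h_tot * τ / NT * |u|) - 1 - 2 * (h_tot * τ / NT * |u|)) ^ NT)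
      (Set.Ici 0) := by
  have hscale : StrictMonoOn (fun τ : ℝ => h_tot * τ / NT) (Ici 0) := fun τ₁ _ τ₂ _ h => by
    have : (0 : ℝ) < NT := Nat.cast_pos.mpr hNT
    dsimp only
    gcongr
  have hmaps : MapsTo (fun τ : ℝ => h_tot * τ / NT) (Ici 0) (Ici 0) := fun τ hτ => by
    dsimp only
    exact div_nonneg (mul_nonneg hh.le hτ) (Nat.cast_nonneg NT)
  refine ⟨fun τ hτ => integrable_cIntegrand NT (hmaps hτ), ?_,
    (strictMonoOn_integral_cIntegrand hNT).comp hscale hmaps⟩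
  rw [mul_zero, zero_div]
  exact integral_cIntegrand_zero NT
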